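/- arXiv:2604.20394 — 2 statements merged into one kernel-verified Lean document; each statement's English description precedes it below -/
import Mathlib

section
/- Let j⁻ = j⁺ − 1 be two adjacent splits in {0,1,...,N−1}. Suppose the data points with x_i ≤ j⁻ number a ≥ 1 and have label mean μ, the data points with x_i > j⁺ number b ≥ 1 and have label mean γ, and all data points with x_i = j⁺ have the same label value v and number B ≥ 0. Then m·(L(j⁺) − L(j⁻)) = B·[ (a/(a+B))·(μ − v)² − (b/(b+B))·(γ − v)² ]. -/
open Finset

/-- Sum of squared errors of the data points whose feature value lies in the range `R`. -/
noncomputable def SSE (m : ℕ) (x : Fin m → ℕ) (y : Fin m → ℝ) (R : Finset ℕ) : ℝ :=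
  let idx := Finset.univ.filter fun i => x i ∈ R
  if idx.Nonempty then
    (∑ i ∈ idx, (y i) ^ 2) - (∑ i ∈ idx, y i) ^ 2 / (idx.card : ℝ)
  else 0

/-- Mean squared loss of split `j ∈ {0,…,N}`. -/
noncomputable def L (m N : ℕ) (x : Fin m → ℕ) (y : Fin m → ℝ) (j : ℕ) : ℝ :=
  (1 / m : ℝ) * (SSE m x y (Finset.Icc 1 j) + SSE m x y (Finset.Icc (j + 1) N))

/-!
Moving the split from `j⁻` to `j⁺` moves the block of points at `x = j⁺` from the right part to
the left part. Adding a block of `B` equal labels `v` to a group of `a` points with mean `μ`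
raises its sum of squared errors by `B · a/(a+B) · (μ - v)²` (the between-group term of the
variance decomposition), so the left part gains this amount with `(a, μ)` and the right part
loses it with `(b, γ)`.
-/

-- For `s = ∅` the junk value `0 / 0 = 0` makes this `0`, matching the `else` branch of `SSE`.
noncomputable def sse {ι : Type*} (s : Finset ι) (y : ι → ℝ) : ℝ :=
  ∑ i ∈ s, y i ^ 2 - (∑ i ∈ s, y i) ^ 2 / #s

theorem SSE_eq_sse (m : ℕ) (x : Fin m → ℕ) (y : Fin m → ℝ) (R : Finset ℕ) :
    SSE m x y R = sse (univ.filter fun i => x i ∈ R) y := by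
  rw [SSE, sse]
  split_ifs with h
  · rfl
  · simp [not_nonempty_iff_eq_empty.mp h]

theorem mul_L_eq (m N : ℕ) (hm : 1 ≤ m) (x : Fin m → ℕ) (y : Fin m → ℝ) (j : ℕ) :
    (m : ℝ) * L m N x y j =
      sse (univ.filter fun i => x i ∈ Icc 1 j) y +
        sse (univ.filter fun i => x i ∈ Icc (j + 1) N) y := by
  have hm0 : (m : ℝ) ≠ 0 := by positivity
  rw [L, SSE_eq_sse, SSE_eq_sse, ← mul_assoc, mul_one_div_cancel hm0, one_mul]

theorem mul_add_mul_sq_div_add {a B : ℝ} (ha : 0 ≤ a) (hB : 0 ≤ B) (μ v : ℝ) :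
    (a * μ + B * v) ^ 2 / (a + B) =
      (a * μ) ^ 2 / a + B * v ^ 2 - B * (a / (a + B)) * (μ - v) ^ 2 := by
  rcases ha.eq_or_lt with rfl | ha
  · rcases hB.eq_or_lt with rfl | hB
    · simp
    · field_simp
      ring
  · have : a + B ≠ 0 := by positivity
    field_simp
    ring

theorem sse_union_of_const {ι : Type*} [DecidableEq ι] {s t : Finset ι} {y : ι → ℝ} {μ v : ℝ}
    (hst : Disjoint s t) (hμ : ∑ i ∈ s, y i = #s * μ) (hv : ∀ i ∈ t, y i = v) :
    sse (s ∪ t) y = sse s y + #t * (#s / (#s + #t)) * (μ - v) ^ 2 := by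
  have ht : ∑ i ∈ t, y i = #t * v := by
    rw [sum_congr rfl hv, sum_const, nsmul_eq_mul]
  have ht2 : ∑ i ∈ t, y i ^ 2 = #t * v ^ 2 := by
    rw [sum_congr rfl fun i hi => by rw [hv i hi], sum_const, nsmul_eq_mul]
  rw [sse, sse, sum_union hst, sum_union hst, card_union_of_disjoint hst, hμ, ht, ht2,
    Nat.cast_add, mul_add_mul_sq_div_add (Nat.cast_nonneg _) (Nat.cast_nonneg _)]
  ring

theorem adjacent_split_gap_general (m N : ℕ) (hm : 1 ≤ m) (x : Fin m → ℕ) (y : Fin m → ℝ)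
    (hx : ∀ i, x i ∈ Finset.Icc 1 N)
    (jp : ℕ)
    (a b B : ℕ) (μ γ v : ℝ)
    (hacard : (Finset.univ.filter fun i => x i ≤ jp - 1).card = a)
    (hasum : (∑ i ∈ Finset.univ.filter fun i => x i ≤ jp - 1, y i) = a * μ)
    (hbcard : (Finset.univ.filter fun i => jp < x i).card = b)
    (hbsum : (∑ i ∈ Finset.univ.filter fun i => jp < x i, y i) = b * γ)
    (hBcard : (Finset.univ.filter fun i => x i = jp).card = B)
    (hv : ∀ i, x i = jp → y i = v) :
    (m : ℝ) * (L m N x y jp - L m N x y (jp - 1)) =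
      (B : ℝ) * (((a : ℝ) / (a + B)) * (μ - v) ^ 2 - ((b : ℝ) / (b + B)) * (γ - v) ^ 2) := by
  set A := univ.filter fun i => x i ≤ jp - 1
  set M := univ.filter fun i => x i = jp
  set R := univ.filter fun i => jp < x i
  have hx' i : 1 ≤ x i ∧ x i ≤ N := mem_Icc.mp (hx i)
  have hleft_jp : univ.filter (fun i => x i ∈ Icc 1 jp) = A ∪ M := by
    ext i; simp only [A, M, mem_filter, mem_union, mem_univ, true_and, mem_Icc]; grind
  have hleft_jm : univ.filter (fun i => x i ∈ Icc 1 (jp - 1)) = A := by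
    ext i; simp only [A, mem_filter, mem_univ, true_and, mem_Icc]; grind
  have hright_jp : univ.filter (fun i => x i ∈ Icc (jp + 1) N) = R := by
    ext i; simp only [R, mem_filter, mem_univ, true_and, mem_Icc]; grind
  have hright_jm : univ.filter (fun i => x i ∈ Icc (jp - 1 + 1) N) = R ∪ M := by
    ext i; simp only [R, M, mem_filter, mem_union, mem_univ, true_and, mem_Icc]; grind
  have hAM : Disjoint A M := disjoint_filter.2 fun i _ h1 h2 => by grind
  have hRM : Disjoint R M := disjoint_filter.2 fun i _ h1 h2 => by grind
  have hvM : ∀ i ∈ M, y i = v := fun i hi => hv i (mem_filter.mp hi).2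
  rw [mul_sub, mul_L_eq m N hm, mul_L_eq m N hm, hleft_jp, hleft_jm, hright_jp, hright_jm,
    sse_union_of_const hAM (hacard ▸ hasum) hvM, sse_union_of_const hRM (hbcard ▸ hbsum) hvM,
    hacard, hbcard, hBcard]
  ring

/-- Adjacent splits `j⁻ = j⁺ − 1`: if the left of `j⁻` holds `a ≥ 1` points with label mean
`μ`, the right of `j⁺` holds `b ≥ 1` points with label mean `γ`, and the `B ≥ 0` points at
`x = j⁺` all carry label `v`, then
`m·(L(j⁺) − L(j⁻)) = B·[(a/(a+B))(μ−v)² − (b/(b+B))(γ−v)²]`. -/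
theorem adjacent_split_gap (m N : ℕ) (hm : 1 ≤ m) (x : Fin m → ℕ) (y : Fin m → ℝ)
    (hx : ∀ i, x i ∈ Finset.Icc 1 N)
    (jp : ℕ) (hjp1 : 1 ≤ jp) (hjpN : jp ≤ N - 1)
    (a b B : ℕ) (μ γ v : ℝ) (ha : 1 ≤ a) (hb : 1 ≤ b)
    (hacard : (Finset.univ.filter fun i => x i ≤ jp - 1).card = a)
    (hasum : (∑ i ∈ Finset.univ.filter fun i => x i ≤ jp - 1, y i) = a * μ)
    (hbcard : (Finset.univ.filter fun i => jp < x i).card = b)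
    (hbsum : (∑ i ∈ Finset.univ.filter fun i => jp < x i, y i) = b * γ)
    (hBcard : (Finset.univ.filter fun i => x i = jp).card = B)
    (hv : ∀ i, x i = jp → y i = v) :
    (m : ℝ) * (L m N x y jp - L m N x y (jp - 1)) =
      (B : ℝ) * (((a : ℝ) / (a + B)) * (μ - v) ^ 2 - ((b : ℝ) / (b + B)) * (γ - v) ^ 2) :=
  adjacent_split_gap_general m N hm x y hx jp a b B μ γ v hacard hasum hbcard hbsum hBcard hv
end

section
/- In the classification lower-bound construction, |L_mis(2i−1) − L_mis(2i)| = B/m = 1/(9n); moreover, if z_i = 1 then L_mis(2i) = L_mis(2i−1) + B/m (so the split 2i−1 is strictly better), and if z_i = 0 then L_mis(2i−1) = L_mis(2i) + B/m (so the split 2i is strictly better). In particular, which of the two adjacent splits achieves the smaller misclassification loss determines the bit z_i. -/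
open Finset Classical

/-- Number of data points with feature value in the range `R` and label `v`. -/
noncomputable def fcount (data : Multiset (ℕ × ℝ)) (v : ℝ) (R : Finset ℕ) : ℕ :=
  Multiset.card (data.filter fun p => p.1 ∈ R ∧ p.2 = v)

/-- Misclassification loss of split `j ∈ {0,…,N}`. -/
noncomputable def Lmis (N : ℕ) (data : Multiset (ℕ × ℝ)) (j : ℕ) : ℝ :=
  (1 / (Multiset.card data : ℝ)) *
    (((min (fcount data (-1) (Finset.Icc 1 j)) (fcount data 1 (Finset.Icc 1 j)) : ℕ) : ℝ) +
     ((min (fcount data (-1) (Finset.Icc (j + 1) N))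
         (fcount data 1 (Finset.Icc (j + 1) N)) : ℕ) : ℝ))

/-- The classification lower-bound dataset: for each `k ∈ {1,…,n}`, `B = n` copies of
`(2k, s_k)` with `s_k = +1` if `z_k = 1` and `s_k = −1` if `z_k = 0`; `T = 4n²` copies of
`(2i−1, −1)`; and `T` copies of `(2i+1, +1)`. -/
noncomputable def classData (n i : ℕ) (z : ℕ → ℕ) : Multiset (ℕ × ℝ) :=
  (∑ k ∈ Finset.Icc 1 n, Multiset.replicate n (2 * k, if z k = 1 then (1 : ℝ) else -1))
  + Multiset.replicate (4 * n ^ 2) (2 * i - 1, (-1 : ℝ))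
  + Multiset.replicate (4 * n ^ 2) (2 * i + 1, (1 : ℝ))

/-!
Moving the split from `2i − 1` to `2i` only moves the `B` points at `2i` from the right part to
the left part. The `T` copies of `(2i − 1, −1)` and of `(2i + 1, +1)` outweigh all `n²` bit
points, so for both splits the left part has a negative majority and the right part a positive
one. The loss then counts the positives on the left plus the negatives on the right, and moving
the points at `2i` changes it by `+B` if `s_i = +1` and by `−B` if `s_i = −1`.
-/

lemma fcount_add (d₁ d₂ : Multiset (ℕ × ℝ)) (v : ℝ) (R : Finset ℕ) :
    fcount (d₁ + d₂) v R = fcount d₁ v R + fcount d₂ v R := by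
  simp only [fcount, Multiset.filter_add, Multiset.card_add]

lemma fcount_sum {ι : Type*} (s : Finset ι) (f : ι → Multiset (ℕ × ℝ)) (v : ℝ)
    (R : Finset ℕ) :
    fcount (∑ k ∈ s, f k) v R = ∑ k ∈ s, fcount (f k) v R := by
  induction s using Finset.cons_induction with
  | empty => simp [fcount]
  | cons a s ha ih => rw [sum_cons, sum_cons, fcount_add, ih]

lemma fcount_replicate (c : ℕ) (p : ℕ × ℝ) (v : ℝ) (R : Finset ℕ) :
    fcount (Multiset.replicate c p) v R = if p.1 ∈ R ∧ p.2 = v then c else 0 := by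
  split_ifs with h
  · rw [fcount, Multiset.filter_eq_self.mpr fun q hq => Multiset.eq_of_mem_replicate hq ▸ h,
      Multiset.card_replicate]
  · rw [fcount, Multiset.filter_eq_nil.mpr fun q hq => Multiset.eq_of_mem_replicate hq ▸ h,
      Multiset.card_zero]

lemma fcount_le_card (d : Multiset (ℕ × ℝ)) (v : ℝ) (R : Finset ℕ) :
    fcount d v R ≤ Multiset.card d :=
  Multiset.card_le_card (Multiset.filter_le _ _)

lemma fcount_union (d : Multiset (ℕ × ℝ)) (v : ℝ) {R S : Finset ℕ} (h : Disjoint R S) :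
    fcount d v (R ∪ S) = fcount d v R + fcount d v S := by
  have hboth : d.filter (fun p => (p.1 ∈ R ∧ p.2 = v) ∧ p.1 ∈ S ∧ p.2 = v) = 0 :=
    Multiset.filter_eq_nil.mpr fun p _ hp => disjoint_left.mp h hp.1.1 hp.2.1
  rw [fcount, fcount, fcount, ← Multiset.card_add, Multiset.filter_add_filter, hboth, add_zero]
  congr 1
  refine Multiset.filter_congr fun p _ => ?_
  rw [mem_union]
  tauto

lemma Lmis_eq_of_majority {N j : ℕ} {d : Multiset (ℕ × ℝ)}
    (hl : fcount d 1 (Icc 1 j) ≤ fcount d (-1) (Icc 1 j))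
    (hr : fcount d (-1) (Icc (j + 1) N) ≤ fcount d 1 (Icc (j + 1) N)) :
    Lmis N d j =
      ((fcount d 1 (Icc 1 j) : ℝ) + fcount d (-1) (Icc (j + 1) N)) / Multiset.card d := by
  rw [Lmis, min_eq_right hl, min_eq_left hr, one_div_mul_eq_div]

lemma Lmis_succ_of_majority {N j : ℕ} {d : Multiset (ℕ × ℝ)} (hjN : j + 1 ≤ N)
    (hl : fcount d 1 (Icc 1 j) ≤ fcount d (-1) (Icc 1 j))
    (hr : fcount d (-1) (Icc (j + 1) N) ≤ fcount d 1 (Icc (j + 1) N))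
    (hl' : fcount d 1 (Icc 1 (j + 1)) ≤ fcount d (-1) (Icc 1 (j + 1)))
    (hr' : fcount d (-1) (Icc (j + 1 + 1) N) ≤ fcount d 1 (Icc (j + 1 + 1) N)) :
    Lmis N d (j + 1) = Lmis N d j +
      ((fcount d 1 {j + 1} : ℝ) - fcount d (-1) {j + 1}) / Multiset.card d := by
  have hleft : Icc 1 (j + 1) = Icc 1 j ∪ {j + 1} := by
    rw [union_comm, ← insert_eq, insert_Icc_right_eq_Icc_add_one (by omega)]
  have hright : Icc (j + 1) N = {j + 1} ∪ Icc (j + 1 + 1) N := by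
    rw [← insert_eq, insert_Icc_add_one_left_eq_Icc hjN]
  rw [Lmis_eq_of_majority hl hr, Lmis_eq_of_majority hl' hr', hleft, hright,
    fcount_union _ _ (by simp), fcount_union _ _ (by simp)]
  push_cast
  ring

noncomputable def bitData (n : ℕ) (z : ℕ → ℕ) : Multiset (ℕ × ℝ) :=
  ∑ k ∈ Icc 1 n, Multiset.replicate n (2 * k, if z k = 1 then (1 : ℝ) else -1)

lemma classData_eq_bitData_add (n i : ℕ) (z : ℕ → ℕ) :
    classData n i z = bitData n z + Multiset.replicate (4 * n ^ 2) (2 * i - 1, (-1 : ℝ))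
      + Multiset.replicate (4 * n ^ 2) (2 * i + 1, (1 : ℝ)) :=
  rfl

lemma card_bitData (n : ℕ) (z : ℕ → ℕ) : Multiset.card (bitData n z) = n * n := by
  simp [bitData]

lemma fcount_bitData_singleton {n i : ℕ} (hi : i ∈ Icc 1 n) (z : ℕ → ℕ) (v : ℝ) :
    fcount (bitData n z) v {2 * i} = if (if z i = 1 then (1 : ℝ) else -1) = v then n else 0 := by
  simp only [bitData, fcount_sum, fcount_replicate, mem_singleton,
    Nat.mul_left_cancel_iff two_pos, ite_and]
  rw [sum_ite_eq' _ _ _, if_pos hi]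

lemma fcount_classData (n i : ℕ) (z : ℕ → ℕ) (v : ℝ) (R : Finset ℕ) :
    fcount (classData n i z) v R = fcount (bitData n z) v R
      + (if 2 * i - 1 ∈ R ∧ -1 = v then 4 * n ^ 2 else 0)
      + (if 2 * i + 1 ∈ R ∧ 1 = v then 4 * n ^ 2 else 0) := by
  rw [classData_eq_bitData_add, fcount_add, fcount_add, fcount_replicate, fcount_replicate]

lemma card_classData (n i : ℕ) (z : ℕ → ℕ) :
    Multiset.card (classData n i z) = 9 * n ^ 2 := by
  rw [classData_eq_bitData_add, Multiset.card_add, Multiset.card_add, card_bitData,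
    Multiset.card_replicate, Multiset.card_replicate]
  ring

lemma fcount_classData_pos_le_neg {n i : ℕ} (z : ℕ → ℕ) {R : Finset ℕ}
    (hneg : 2 * i - 1 ∈ R) (hpos : 2 * i + 1 ∉ R) :
    fcount (classData n i z) 1 R ≤ fcount (classData n i z) (-1) R := by
  have hbits := fcount_le_card (bitData n z) 1 R
  have hsq : n * n ≤ 4 * n ^ 2 := by nlinarith
  rw [card_bitData] at hbits
  norm_num [fcount_classData, hneg, hpos]
  omega

lemma fcount_classData_neg_le_pos {n i : ℕ} (z : ℕ → ℕ) {R : Finset ℕ}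
    (hpos : 2 * i + 1 ∈ R) (hneg : 2 * i - 1 ∉ R) :
    fcount (classData n i z) (-1) R ≤ fcount (classData n i z) 1 R := by
  have hbits := fcount_le_card (bitData n z) (-1) R
  have hsq : n * n ≤ 4 * n ^ 2 := by nlinarith
  rw [card_bitData] at hbits
  norm_num [fcount_classData, hneg, hpos]
  omega

lemma fcount_classData_singleton {n i : ℕ} (hi : i ∈ Icc 1 n) (z : ℕ → ℕ) (v : ℝ) :
    fcount (classData n i z) v {2 * i} =
      if (if z i = 1 then (1 : ℝ) else -1) = v then n else 0 := by
  have hi1 := (mem_Icc.mp hi).1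
  rw [fcount_classData, fcount_bitData_singleton hi]
  simp [show 2 * i - 1 ≠ 2 * i by omega]

lemma Lmis_classData_two_mul {n i : ℕ} (hi : i ∈ Icc 1 n) (z : ℕ → ℕ) :
    Lmis (2 * n + 1) (classData n i z) (2 * i) =
      Lmis (2 * n + 1) (classData n i z) (2 * i - 1)
        + (if z i = 1 then (n : ℝ) else -n) / Multiset.card (classData n i z) := by
  obtain ⟨hi1, hin⟩ := mem_Icc.mp hi
  obtain ⟨j, hj⟩ : ∃ j, 2 * i = j + 1 := ⟨2 * i - 1, by omega⟩
  have hj' : 2 * i - 1 = j := by omega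
  have hstep : (fcount (classData n i z) 1 {2 * i} : ℝ) - fcount (classData n i z) (-1) {2 * i}
      = if z i = 1 then (n : ℝ) else -n := by
    rw [fcount_classData_singleton hi, fcount_classData_singleton hi]
    by_cases h : z i = 1 <;> norm_num [h]
  rw [← hstep, hj', hj]
  refine Lmis_succ_of_majority (by omega) ?_ ?_ ?_ ?_
  · exact fcount_classData_pos_le_neg z (by rw [mem_Icc]; omega) (by rw [mem_Icc]; omega)
  · exact fcount_classData_neg_le_pos z (by rw [mem_Icc]; omega) (by rw [mem_Icc]; omega)
  · exact fcount_classData_pos_le_neg z (by rw [mem_Icc]; omega) (by rw [mem_Icc]; omega)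
  · exact fcount_classData_neg_le_pos z (by rw [mem_Icc]; omega) (by rw [mem_Icc]; omega)

theorem cls_gap_reveals_bit_general (n : ℕ) (i : ℕ) (hi : i ∈ Finset.Icc 1 n)
    (z : ℕ → ℕ) :
    |Lmis (2 * n + 1) (classData n i z) (2 * i - 1)
        - Lmis (2 * n + 1) (classData n i z) (2 * i)|
      = (n : ℝ) / (Multiset.card (classData n i z) : ℝ) ∧
    (n : ℝ) / (Multiset.card (classData n i z) : ℝ) = 1 / (9 * (n : ℝ)) ∧
    (z i = 1 →
      Lmis (2 * n + 1) (classData n i z) (2 * i)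
        = Lmis (2 * n + 1) (classData n i z) (2 * i - 1)
          + (n : ℝ) / (Multiset.card (classData n i z) : ℝ)) ∧
    (z i = 0 →
      Lmis (2 * n + 1) (classData n i z) (2 * i - 1)
        = Lmis (2 * n + 1) (classData n i z) (2 * i)
          + (n : ℝ) / (Multiset.card (classData n i z) : ℝ)) := by
  have hstep := Lmis_classData_two_mul hi z
  have hgap : (n : ℝ) / Multiset.card (classData n i z) = 1 / (9 * (n : ℝ)) := by
    have hn : (n : ℝ) ≠ 0 := Nat.cast_ne_zero.mpr (by have := mem_Icc.mp hi; omega)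
    rw [card_classData]
    field_simp
    push_cast
    ring
  have hgap_nonneg : 0 ≤ (n : ℝ) / Multiset.card (classData n i z) := by positivity
  refine ⟨?_, hgap, fun h1 => ?_, fun h0 => ?_⟩
  · by_cases h1 : z i = 1
    · rw [hstep, if_pos h1, sub_add_cancel_left, abs_neg, abs_of_nonneg hgap_nonneg]
    · rw [hstep, if_neg h1, neg_div, sub_add_cancel_left, neg_neg, abs_of_nonneg hgap_nonneg]
  · rw [hstep, if_pos h1]
  · rw [hstep, if_neg (by omega), neg_div, neg_add_cancel_right]

/-- In the classification lower-bound construction, the losses of the adjacent splits `2i−1`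
and `2i` differ by exactly `B/m = 1/(9n)`; if `z_i = 1` then `L_mis(2i) = L_mis(2i−1) + B/m`
(the split `2i−1` is strictly better), and if `z_i = 0` then
`L_mis(2i−1) = L_mis(2i) + B/m` (the split `2i` is strictly better); hence the better of the
two adjacent splits reveals the bit `z_i`. -/
theorem cls_gap_reveals_bit (n : ℕ) (hn : 1 ≤ n) (i : ℕ) (hi : i ∈ Finset.Icc 1 n)
    (z : ℕ → ℕ) (hz : ∀ k, z k = 0 ∨ z k = 1) :
    |Lmis (2 * n + 1) (classData n i z) (2 * i - 1)
        - Lmis (2 * n + 1) (classData n i z) (2 * i)|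
      = (n : ℝ) / (Multiset.card (classData n i z) : ℝ) ∧
    (n : ℝ) / (Multiset.card (classData n i z) : ℝ) = 1 / (9 * (n : ℝ)) ∧
    (z i = 1 →
      Lmis (2 * n + 1) (classData n i z) (2 * i)
        = Lmis (2 * n + 1) (classData n i z) (2 * i - 1)
          + (n : ℝ) / (Multiset.card (classData n i z) : ℝ)) ∧
    (z i = 0 →
      Lmis (2 * n + 1) (classData n i z) (2 * i - 1)
        = Lmis (2 * n + 1) (classData n i z) (2 * i)
          + (n : ℝ) / (Multiset.card (classData n i z) : ℝ)) :=
  cls_gap_reveals_bit_general n i hi z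
end
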